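/- arXiv:1108.0679 — 6 statements merged into one kernel-verified Lean document; each statement's English description precedes it below -/
import Mathlib

section
/- Let H be a binary matrix in which every column has at least two 1-entries, every row has at least two 1-entries, H contains no 2×2 all-ones submatrix, and rank(H·Hᵀ) = 1 over F_2. Then every pair of distinct rows of H shares exactly one common 1-position, and every row of H has odd weight. -/
open Matrix

/-!
Over `F₂` the entry `(H Hᵀ) i i'` is the parity of the number of common 1-positions of rows
`i` and `i'`. Excluding `2 × 2` all-ones submatrices makes these overlaps at most one for
`i ≠ i'`, and the weight conditions make every row of `H` meet some other row in exactly one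
position, so `H Hᵀ` has no zero column. A symmetric rank-one matrix over `F₂` without zero
columns is the all-ones matrix, which gives overlap exactly one off the diagonal and odd row
weights on it.
-/

theorem ZMod.eq_one_of_ne_zero_two : ∀ c : ZMod 2, c ≠ 0 → c = 1 := by decide

theorem ZMod.mul_eq_ite_two : ∀ a b : ZMod 2, a * b = if a = 1 ∧ b = 1 then 1 else 0 := by
  decide

namespace Matrix

variable {m n : Type*}

theorem col_eq_col_of_rank_le_one [Fintype m] [Fintype n] {A : Matrix m n (ZMod 2)}
    (hrank : A.rank ≤ 1) (hcol : ∀ k, A.col k ≠ 0) (k k' : n) : A.col k = A.col k' := by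
  rw [rank_eq_finrank_span_cols, finrank_le_one_iff] at hrank
  obtain ⟨v, hv⟩ := hrank
  suffices ∀ k, A.col k = v by rw [this k, this k']
  intro k
  obtain ⟨c, hc⟩ := hv ⟨A.col k, Submodule.subset_span ⟨k, rfl⟩⟩
  have hc0 : c ≠ 0 := by
    rintro rfl
    exact hcol k (by simpa using (congrArg Subtype.val hc).symm)
  rw [ZMod.eq_one_of_ne_zero_two c hc0, one_smul] at hc
  exact (congrArg Subtype.val hc).symm

theorem IsSymm.apply_eq_one_of_rank_le_one [Fintype n] {A : Matrix n n (ZMod 2)} (hA : A.IsSymm)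
    (hrank : A.rank ≤ 1) (hcol : ∀ k, A.col k ≠ 0) (i j : n) : A i j = 1 := by
  obtain ⟨a, ha⟩ := Function.ne_iff.mp (hcol j)
  have hcols := col_eq_col_of_rank_le_one hrank hcol
  have hia : A i j = A a j := by
    rw [← hA.apply i j, ← hA.apply a j]
    exact congrFun (hcols i a) j
  exact ZMod.eq_one_of_ne_zero_two _ (hia ▸ ha)

variable [Fintype n] {H : Matrix m n (ZMod 2)}

theorem mul_transpose_apply_eq_card_common (i i' : m) :
    (H * Hᵀ) i i' = (Finset.univ.filter (fun j => H i j = 1 ∧ H i' j = 1)).card := by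
  simp only [mul_apply, transpose_apply, ZMod.mul_eq_ite_two, Finset.sum_boole]

theorem card_common_le_one (h4 : ¬ ∃ (i₁ i₂ : m) (j₁ j₂ : n), i₁ ≠ i₂ ∧ j₁ ≠ j₂ ∧
      H i₁ j₁ = 1 ∧ H i₁ j₂ = 1 ∧ H i₂ j₁ = 1 ∧ H i₂ j₂ = 1) {i i' : m} (hne : i ≠ i') :
    (Finset.univ.filter (fun j => H i j = 1 ∧ H i' j = 1)).card ≤ 1 := by
  refine Finset.card_le_one.mpr fun j₁ hj₁ j₂ hj₂ => ?_
  rw [Finset.mem_filter] at hj₁ hj₂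
  by_contra hjne
  exact h4 ⟨i, i', j₁, j₂, hne, hjne, hj₁.2.1, hj₂.2.1, hj₁.2.2, hj₂.2.2⟩

theorem col_mul_transpose_ne_zero [Fintype m]
    (hcol : ∀ j : n, 2 ≤ (Finset.univ.filter (fun i : m => H i j = 1)).card)
    (hrow : ∀ i : m, 1 ≤ (Finset.univ.filter (fun j : n => H i j = 1)).card)
    (h4 : ¬ ∃ (i₁ i₂ : m) (j₁ j₂ : n), i₁ ≠ i₂ ∧ j₁ ≠ j₂ ∧
      H i₁ j₁ = 1 ∧ H i₁ j₂ = 1 ∧ H i₂ j₁ = 1 ∧ H i₂ j₂ = 1) (k : m) :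
    (H * Hᵀ).col k ≠ 0 := by
  obtain ⟨j, hj⟩ := Finset.card_pos.mp (hrow k)
  obtain ⟨i, hi, hik⟩ := Finset.exists_mem_ne (hcol j) k
  rw [Finset.mem_filter] at hj hi
  have hcommon : (Finset.univ.filter (fun j => H i j = 1 ∧ H k j = 1)).card = 1 :=
    le_antisymm (card_common_le_one h4 hik)
      (Finset.card_pos.mpr ⟨j, Finset.mem_filter.mpr ⟨Finset.mem_univ j, hi.2, hj.2⟩⟩)
  refine Function.ne_iff.mpr ⟨i, ?_⟩
  simp only [col_apply, mul_transpose_apply_eq_card_common, hcommon, Nat.cast_one, Pi.zero_apply]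
  exact one_ne_zero

end Matrix

/-- If every column and every row of a binary matrix `H` has at
least two 1-entries, `H` has no `2 × 2` all-ones submatrix, and
`rank (H * Hᵀ) = 1` over `F_2`, then every pair of distinct rows shares exactly
one common 1-position and every row has odd weight. -/
theorem stmt2 (v b : ℕ) (H : Matrix (Fin v) (Fin b) (ZMod 2))
    (hcol : ∀ j : Fin b, 2 ≤ (Finset.univ.filter (fun i : Fin v => H i j = 1)).card)
    (hrow : ∀ i : Fin v, 2 ≤ (Finset.univ.filter (fun j : Fin b => H i j = 1)).card)
    (h4 : ¬ ∃ (i₁ i₂ : Fin v) (j₁ j₂ : Fin b), i₁ ≠ i₂ ∧ j₁ ≠ j₂ ∧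
      H i₁ j₁ = 1 ∧ H i₁ j₂ = 1 ∧ H i₂ j₁ = 1 ∧ H i₂ j₂ = 1)
    (hrank : (H * Hᵀ).rank = 1) :
    (∀ i i' : Fin v, i ≠ i' →
      (Finset.univ.filter (fun j : Fin b => H i j = 1 ∧ H i' j = 1)).card = 1) ∧
    (∀ i : Fin v, Odd (Finset.univ.filter (fun j : Fin b => H i j = 1)).card) := by
  have hsymm : (H * Hᵀ).IsSymm := by
    rw [IsSymm, transpose_mul, transpose_transpose]
  have hones : ∀ i i', (H * Hᵀ) i i' = 1 :=
    hsymm.apply_eq_one_of_rank_le_one hrank.le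
      (col_mul_transpose_ne_zero hcol (fun i => one_le_two.trans (hrow i)) h4)
  have hodd : ∀ i i', Odd (Finset.univ.filter (fun j => H i j = 1 ∧ H i' j = 1)).card := by
    intro i i'
    rw [← ZMod.natCast_eq_one_iff_odd, ← mul_transpose_apply_eq_card_common, hones]
  refine ⟨fun i i' hne => ?_, fun i => ?_⟩
  · obtain ⟨k, hk⟩ := hodd i i'
    have := card_common_le_one h4 hne
    omega
  · simpa only [and_self] using hodd i i
end

section
/- Let (V, B) be a pairwise balanced design of index one in which every block has size at least 2 and every point lies in at least 2 blocks, and suppose |V| ≥ 2. Then the incidence matrix of (V,B) (rows indexed by points, columns by blocks) contains a 3×3 submatrix in which each row and each column has exactly two 1-entries (a 6-cycle). Consequently its Tanner graph has girth exactly six. -/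
/-- A pairwise balanced design of index one with all blocks of
size ≥ 2, all points in ≥ 2 blocks, and at least 2 points, has no 4-cycle in
its incidence matrix but contains a 6-cycle (a `3 × 3` submatrix with exactly
two ones in each row and column); hence its Tanner graph has girth exactly six. -/
theorem stmt3 (V : Type*) [Fintype V] [DecidableEq V] (B : Finset (Finset V))
    (hpbd : ∀ x y : V, x ≠ y → (B.filter (fun blk => x ∈ blk ∧ y ∈ blk)).card = 1)
    (hblk : ∀ blk ∈ B, 2 ≤ blk.card)
    (hrep : ∀ x : V, 2 ≤ (B.filter (fun blk => x ∈ blk)).card)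
    (hv : 2 ≤ Fintype.card V) :
    (¬ ∃ (x y : V) (B₁ B₂ : Finset V), x ≠ y ∧ B₁ ≠ B₂ ∧ B₁ ∈ B ∧ B₂ ∈ B ∧
        x ∈ B₁ ∧ x ∈ B₂ ∧ y ∈ B₁ ∧ y ∈ B₂) ∧
    (∃ (x y z : V) (B₁ B₂ B₃ : Finset V), x ≠ y ∧ y ≠ z ∧ x ≠ z ∧
        B₁ ≠ B₂ ∧ B₂ ≠ B₃ ∧ B₁ ≠ B₃ ∧ B₁ ∈ B ∧ B₂ ∈ B ∧ B₃ ∈ B ∧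
        x ∈ B₁ ∧ x ∈ B₂ ∧ x ∉ B₃ ∧
        y ∈ B₁ ∧ y ∉ B₂ ∧ y ∈ B₃ ∧
        z ∉ B₁ ∧ z ∈ B₂ ∧ z ∈ B₃) := by
  -- key uniqueness: two blocks containing a common pair are equal
  have key : ∀ x y : V, x ≠ y → ∀ C D : Finset V, C ∈ B → D ∈ B →
      x ∈ C → y ∈ C → x ∈ D → y ∈ D → C = D := by
    intro x y hxy C D hC hD hxC hyC hxD hyD
    have h := hpbd x y hxy
    have hCm : C ∈ B.filter (fun blk => x ∈ blk ∧ y ∈ blk) := by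
      simp [Finset.mem_filter, hC, hxC, hyC]
    have hDm : D ∈ B.filter (fun blk => x ∈ blk ∧ y ∈ blk) := by
      simp [Finset.mem_filter, hD, hxD, hyD]
    exact Finset.card_le_one.mp h.le C hCm D hDm
  -- existence of a block through any pair
  have exists_blk : ∀ x y : V, x ≠ y → ∃ C ∈ B, x ∈ C ∧ y ∈ C := by
    intro x y hxy
    have h := hpbd x y hxy
    have : (B.filter (fun blk => x ∈ blk ∧ y ∈ blk)).Nonempty := by
      rw [← Finset.card_pos, h]; norm_num
    obtain ⟨C, hC⟩ := this
    simp only [Finset.mem_filter] at hC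
    exact ⟨C, hC.1, hC.2⟩
  constructor
  · rintro ⟨x, y, B₁, B₂, hxy, hB, hB₁, hB₂, hx1, hx2, hy1, hy2⟩
    exact hB (key x y hxy B₁ B₂ hB₁ hB₂ hx1 hy1 hx2 hy2)
  · -- get two distinct points
    obtain ⟨x, y, hxy⟩ := Fintype.exists_pair_of_one_lt_card hv
    obtain ⟨B₁, hB₁, hx1, hy1⟩ := exists_blk x y hxy
    -- get a second block through x
    have h2 : 2 ≤ (B.filter (fun blk => x ∈ blk)).card := hrep x
    obtain ⟨B₂, hB₂m, hB₂ne⟩ : ∃ C ∈ B.filter (fun blk => x ∈ blk), C ≠ B₁ := by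
      by_contra hcon
      push_neg at hcon
      have : (B.filter (fun blk => x ∈ blk)) ⊆ {B₁} := fun C hC => by
        simp [hcon C hC]
      have := Finset.card_le_card this
      simp at this
      omega
    simp only [Finset.mem_filter] at hB₂m
    obtain ⟨hB₂, hx2⟩ := hB₂m
    -- y ∉ B₂
    have hy2 : y ∉ B₂ := fun h => hB₂ne (key x y hxy B₂ B₁ hB₂ hB₁ hx2 h hx1 hy1)
    -- pick z ∈ B₂, z ≠ x
    obtain ⟨z, hz2, hzx⟩ : ∃ z ∈ B₂, z ≠ x := by
      have := hblk B₂ hB₂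
      have : 1 < B₂.card := this
      obtain ⟨a, ha, b, hb, hab⟩ := Finset.one_lt_card.mp this
      by_cases h : a = x
      · exact ⟨b, hb, by rintro rfl; exact hab (h ▸ rfl)⟩
      · exact ⟨a, ha, h⟩
    have hzy : z ≠ y := fun h => hy2 (h ▸ hz2)
    -- z ∉ B₁
    have hz1 : z ∉ B₁ := fun h =>
      hB₂ne (key x z (Ne.symm hzx) B₂ B₁ hB₂ hB₁ hx2 hz2 hx1 h)
    -- block through y and z
    obtain ⟨B₃, hB₃, hy3, hz3⟩ := exists_blk y z (Ne.symm hzy)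
    have h13 : B₁ ≠ B₃ := fun h => hz1 (h ▸ hz3)
    have h23 : B₂ ≠ B₃ := fun h => hy2 (h ▸ hy3)
    have hx3 : x ∉ B₃ := fun h => h13 (key x y hxy B₁ B₃ hB₁ hB₃ hx1 hy1 h hy3)
    exact ⟨x, y, z, B₁, B₂, B₃, hxy, Ne.symm hzy, Ne.symm hzx,
      Ne.symm hB₂ne, h23, h13, hB₁, hB₂, hB₃,
      hx1, hx2, hx3, hy1, hy2, hy3, hz1, hz2, hz3⟩
end

section
/- Let H be the v × b incidence matrix of an S(2,μ,v) with μ ≥ 2 and v > μ (rows indexed by points, columns by blocks). Then any set of columns of H that sums to zero over F_2 has size at least μ + 1; equivalently, the binary code with parity-check matrix H has minimum distance at least μ + 1. -/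
/-!
Fix a block `b` of an evenly covering family `S`. Each point of `b` lies in an even, hence
positive, number of blocks of `S` other than `b`; and a block `c ≠ b` contains at most one point
of `b`, since two points lie in at most one common block. Double counting incidences between `b`
and `S \ {b}` gives `#b ≤ #S - 1`.
-/

namespace Finset

variable {α : Type*} [DecidableEq α]

lemma exists_mem_erase_of_even_card_filter_mem {S : Finset (Finset α)} {b : Finset α} {x : α}
    (hb : b ∈ S) (hx : x ∈ b) (heven : Even #(S.filter (x ∈ ·))) :
    ∃ c ∈ S.erase b, x ∈ c := by
  have hmem : b ∈ S.filter (x ∈ ·) := mem_filter.mpr ⟨hb, hx⟩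
  have hpos : 0 < #((S.filter (x ∈ ·)).erase b) := by
    obtain ⟨k, hk⟩ := heven
    have := card_pos.mpr ⟨b, hmem⟩
    rw [card_erase_of_mem hmem]
    omega
  obtain ⟨c, hc⟩ := card_pos.mp hpos
  rw [mem_erase, mem_filter] at hc
  exact ⟨c, mem_erase.mpr ⟨hc.1, hc.2.1⟩, hc.2.2⟩

theorem card_lt_card_of_forall_even_card_filter_mem {B S : Finset (Finset α)} (hSB : S ⊆ B)
    (hpair : ∀ x y : α, x ≠ y → #(B.filter fun blk => x ∈ blk ∧ y ∈ blk) ≤ 1)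
    (heven : ∀ x, Even #(S.filter (x ∈ ·))) {b : Finset α} (hb : b ∈ S) : #b < #S := by
  have hcover : ∀ x ∈ b, ∃ c, c ∈ S.erase b ∧ x ∈ c := fun x hx =>
    exists_mem_erase_of_even_card_filter_mem hb hx (heven x)
  have hmeet : ∀ c ∈ S.erase b, ({x ∈ b | x ∈ c} : Set α).Subsingleton := by
    intro c hc x ⟨hxb, hxc⟩ y ⟨hyb, hyc⟩
    by_contra hxy
    obtain ⟨hcb, hcS⟩ := mem_erase.mp hc
    exact hcb <| card_le_one.mp (hpair x y hxy) c (mem_filter.mpr ⟨hSB hcS, hxc, hyc⟩)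
      b (mem_filter.mpr ⟨hSB hb, hxb, hyb⟩)
  calc #b ≤ #(S.erase b) := card_le_card_of_forall_subsingleton (· ∈ ·) hcover hmeet
    _ < #S := card_erase_lt_of_mem hb

end Finset

theorem stmt6_general (V : Type*) [DecidableEq V] (B : Finset (Finset V))
    (μ : ℕ)
    (hsize : ∀ blk ∈ B, blk.card = μ)
    (hpair : ∀ x y : V, x ≠ y → (B.filter (fun blk => x ∈ blk ∧ y ∈ blk)).card = 1) :
    ∀ S ⊆ B, S.Nonempty →
      (∀ x : V, Even ((S.filter (fun blk => x ∈ blk)).card)) → μ + 1 ≤ S.card := by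
  rintro S hSB ⟨b, hb⟩ heven
  rw [← hsize b (hSB hb)]
  exact Finset.card_lt_card_of_forall_even_card_filter_mem hSB
    (fun x y hxy => (hpair x y hxy).le) heven hb

/-- For an `S(2,μ,v)` with `2 ≤ μ < v`, any nonempty set of
columns of its incidence matrix summing to zero over `F_2` (equivalently, a
nonempty subfamily of blocks covering every point an even number of times) has
size at least `μ + 1`; i.e. the code with parity-check matrix `H` has minimum
distance at least `μ + 1`. -/
theorem stmt6 (V : Type*) [Fintype V] [DecidableEq V] (B : Finset (Finset V))
    (v μ : ℕ) (hv : Fintype.card V = v) (hμ : 2 ≤ μ) (hvμ : μ < v)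
    (hsize : ∀ blk ∈ B, blk.card = μ)
    (hpair : ∀ x y : V, x ≠ y → (B.filter (fun blk => x ∈ blk ∧ y ∈ blk)).card = 1) :
    ∀ S ⊆ B, S.Nonempty →
      (∀ x : V, Even ((S.filter (fun blk => x ∈ blk)).card)) → μ + 1 ≤ S.card :=
  stmt6_general V B μ hsize hpair
end

section
/- An S(2,3,v) with v ≥ 3 is 5-even-free if and only if it contains no Pasch configuration, i.e., no four blocks on six points of the form {a,b,c}, {a,d,e}, {f,b,d}, {f,c,e} with a,b,c,d,e,f distinct. In particular, every 4-even-free S(2,3,v) is 5-even-free. -/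
/-- A configuration `C` (a subfamily of the block set) is even if every point
lies in an even number of blocks of `C`. -/
def IsEvenConfig {V : Type*} [DecidableEq V] (C : Finset (Finset V)) : Prop :=
  ∀ x : V, Even ((C.filter (fun blk => x ∈ blk)).card)

/-- A design with block set `B` is `r`-even-free if no nonempty subfamily of at
most `r` blocks is an even configuration. -/
def EvenFree {V : Type*} [DecidableEq V] (B : Finset (Finset V)) (r : ℕ) : Prop :=
  ∀ C ⊆ B, C.Nonempty → C.card ≤ r → ¬ IsEvenConfig C

/-!
Every block has odd size, so an even configuration has an even number of blocks, and two
distinct blocks never form one; a nonempty even configuration of at most five blocks therefore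
has exactly four. In such a configuration inside a linear system no point lies on three blocks
(it would lie on all four, and then a second point of one block would put two blocks through
two common points), and any two blocks meet (the three points of a block missing another one
would have to be covered by the remaining two blocks, each meeting it at most once). The six
pairwise intersection points then form a Pasch configuration, which conversely is itself an
even configuration of four blocks.
-/

open Finset

theorem Finset.insert_insert_singleton_eq_of_card_eq_three {α : Type*} [DecidableEq α]
    {s : Finset α} (hs : #s = 3) {x y z : α} (hx : x ∈ s) (hy : y ∈ s) (hz : z ∈ s)
    (hxy : x ≠ y) (hxz : x ≠ z) (hyz : y ≠ z) : ({x, y, z} : Finset α) = s :=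
  eq_of_subset_of_card_le (by simp [insert_subset_iff, hx, hy, hz])
    (by rw [hs, card_eq_three.mpr ⟨x, y, z, hxy, hxz, hyz, rfl⟩])

section

variable {V : Type*} [DecidableEq V] {B C : Finset (Finset V)}

def IsLinear (B : Finset (Finset V)) : Prop :=
  (B : Set (Finset V)).Pairwise fun X Y => #(X ∩ Y) ≤ 1

def HasPasch (B : Finset (Finset V)) : Prop :=
  ∃ a b c d e f : V, ([a, b, c, d, e, f] : List V).Pairwise (· ≠ ·) ∧
    ({a, b, c} : Finset V) ∈ B ∧ ({a, d, e} : Finset V) ∈ B ∧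
    ({f, b, d} : Finset V) ∈ B ∧ ({f, c, e} : Finset V) ∈ B

theorem IsLinear.mono (hB : IsLinear B) (hCB : C ⊆ B) : IsLinear C :=
  Set.Pairwise.mono (coe_subset.mpr hCB) hB

theorem IsLinear.eq_of_mem_of_mem (hC : IsLinear C) {X Y : Finset V} (hX : X ∈ C) (hY : Y ∈ C)
    {x y : V} (hxy : x ≠ y) (hxX : x ∈ X) (hyX : y ∈ X) (hxY : x ∈ Y) (hyY : y ∈ Y) : X = Y := by
  by_contra hXY
  exact hxy (card_le_one.mp (hC hX hY hXY) x (mem_inter.mpr ⟨hxX, hxY⟩) y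
    (mem_inter.mpr ⟨hyX, hyY⟩))

theorem isLinear_of_card_filter_le_one
    (hpair : ∀ x y : V, x ≠ y → #{X ∈ B | x ∈ X ∧ y ∈ X} ≤ 1) : IsLinear B := by
  intro X hX Y hY hXY
  refine card_le_one.mpr fun x hx y hy => ?_
  by_contra hxy
  rw [mem_inter] at hx hy
  have hsub : ({X, Y} : Finset (Finset V)) ⊆ {X ∈ B | x ∈ X ∧ y ∈ X} := by
    simp only [insert_subset_iff, singleton_subset_iff, mem_filter]
    exact ⟨⟨hX, hx.1, hy.1⟩, hY, hx.2, hy.2⟩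
  have := (card_le_card hsub).trans (hpair x y hxy)
  rw [card_pair hXY] at this
  omega

theorem HasPasch.mono (hCB : C ⊆ B) : HasPasch C → HasPasch B
  | ⟨a, b, c, d, e, f, h, h₁, h₂, h₃, h₄⟩ =>
    ⟨a, b, c, d, e, f, h, hCB h₁, hCB h₂, hCB h₃, hCB h₄⟩

theorem sum_card_eq_sum_card_filter_mem (C : Finset (Finset V)) :
    ∑ X ∈ C, #X = ∑ x ∈ C.sup id, #{X ∈ C | x ∈ X} := by
  calc ∑ X ∈ C, #X = ∑ X ∈ C, #((C.sup id).bipartiteAbove (fun X x => x ∈ X) X) := by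
        refine sum_congr rfl fun X hX => ?_
        rw [bipartiteAbove, filter_mem_eq_inter,
          inter_eq_right.mpr (show X ⊆ C.sup id from le_sup (f := id) hX)]
    _ = _ := sum_card_bipartiteAbove_eq_sum_card_bipartiteBelow _

theorem IsEvenConfig.even_card (hC : IsEvenConfig C) (hodd : ∀ X ∈ C, Odd #X) : Even #C := by
  have hmod : ((∑ X ∈ C, #X : ℕ) : ZMod 2) = #C := by
    rw [Nat.cast_sum, card_eq_sum_ones, Nat.cast_sum]
    exact sum_congr rfl fun X hX => by simpa [ZMod.natCast_eq_one_iff_odd] using hodd X hX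
  rw [← ZMod.natCast_eq_zero_iff_even, ← hmod, sum_card_eq_sum_card_filter_mem, Nat.cast_sum]
  exact sum_eq_zero fun x _ => (ZMod.natCast_eq_zero_iff_even).2 (hC x)

theorem IsEvenConfig.card_ne_two (hC : IsEvenConfig C) : #C ≠ 2 := by
  intro h2
  obtain ⟨X, Y, hXY, rfl⟩ := card_eq_two.mp h2
  obtain ⟨x, hx⟩ : ∃ x, ¬ (x ∈ X ↔ x ∈ Y) := by
    by_contra! h
    exact hXY (ext h)
  have := hC x
  by_cases hX : x ∈ X <;> simp_all [filter_insert, filter_singleton]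

theorem IsEvenConfig.exists_ne_mem (hC : IsEvenConfig C) {X : Finset V} (hX : X ∈ C) {x : V}
    (hx : x ∈ X) : ∃ Y ∈ C, Y ≠ X ∧ x ∈ Y := by
  have hpos : 0 < #{Y ∈ C | x ∈ Y} := card_pos.mpr ⟨X, mem_filter.mpr ⟨hX, hx⟩⟩
  obtain ⟨k, hk⟩ := hC x
  obtain ⟨Y, hY, hYX⟩ := exists_mem_ne (by omega : 1 < #{Y ∈ C | x ∈ Y}) X
  exact ⟨Y, (mem_filter.mp hY).1, hYX, (mem_filter.mp hY).2⟩

theorem IsEvenConfig.card_filter_mem_le_two (hC : IsEvenConfig C) (hlin : IsLinear C)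
    (h2 : ∀ X ∈ C, 2 ≤ #X) (h4 : #C ≤ 4) (x : V) : #{X ∈ C | x ∈ X} ≤ 2 := by
  by_contra! hgt
  obtain ⟨k, hk⟩ := hC x
  have hle := card_filter_le C (x ∈ ·)
  have hxC : ∀ Z ∈ C, x ∈ Z :=
    filter_eq_self.mp (eq_of_subset_of_card_le (filter_subset _ _) (by omega))
  obtain ⟨X, hX⟩ := card_pos.mp (by omega : 0 < #C)
  obtain ⟨y, hy, hyx⟩ := exists_mem_ne (h2 X hX) x
  obtain ⟨Y, hY, hYX, hyY⟩ := hC.exists_ne_mem hX hy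
  exact hYX (hlin.eq_of_mem_of_mem hY hX hyx.symm (hxC Y hY) hyY (hxC X hX) hy)

theorem IsEvenConfig.notMem_of_mem_of_mem (hC : IsEvenConfig C) (hlin : IsLinear C)
    (h2 : ∀ X ∈ C, 2 ≤ #X) (h4 : #C ≤ 4) {X Y Z : Finset V} (hX : X ∈ C) (hY : Y ∈ C)
    (hZ : Z ∈ C) (hXY : X ≠ Y) (hXZ : X ≠ Z) (hYZ : Y ≠ Z) {x : V} (hxX : x ∈ X)
    (hxY : x ∈ Y) : x ∉ Z := by
  intro hxZ
  have := (card_le_card (s := {X, Y, Z}) (by simp [insert_subset_iff, *])).trans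
    (hC.card_filter_mem_le_two hlin h2 h4 x)
  rw [card_eq_three.mpr ⟨X, Y, Z, hXY, hXZ, hYZ, rfl⟩] at this
  omega

theorem IsEvenConfig.inter_nonempty (hC : IsEvenConfig C) (hlin : IsLinear C) (h4 : #C ≤ 4)
    {X Y : Finset V} (hX : X ∈ C) (hY : Y ∈ C) (hXY : X ≠ Y) (h3 : 3 ≤ #X) :
    (X ∩ Y).Nonempty := by
  by_contra hdisj
  have hcover : X ⊆ ((C.erase X).erase Y).biUnion (X ∩ ·) := by
    intro x hx
    obtain ⟨Z, hZ, hZX, hxZ⟩ := hC.exists_ne_mem hX hx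
    have hZY : Z ≠ Y := by rintro rfl; exact hdisj ⟨x, mem_inter.mpr ⟨hx, hxZ⟩⟩
    exact mem_biUnion.mpr ⟨Z, mem_erase.mpr ⟨hZY, mem_erase.mpr ⟨hZX, hZ⟩⟩, mem_inter.mpr ⟨hx, hxZ⟩⟩
  have hbound := (card_le_card hcover).trans (card_biUnion_le_card_mul _ _ 1 fun Z hZ =>
    hlin hX (mem_of_mem_erase (mem_of_mem_erase hZ)) (ne_of_mem_erase (mem_of_mem_erase hZ)).symm)
  rw [card_erase_of_mem (mem_erase.mpr ⟨hXY.symm, hY⟩), card_erase_of_mem hX] at hbound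
  omega

theorem IsEvenConfig.hasPasch (hC : IsEvenConfig C) (hlin : IsLinear C)
    (h3 : ∀ X ∈ C, #X = 3) (h4 : #C = 4) : HasPasch C := by
  have hmeet {X Y : Finset V} (hX : X ∈ C) (hY : Y ∈ C) (hXY : X ≠ Y) :
      ∃ x, x ∈ X ∧ x ∈ Y := by
    simpa only [Finset.Nonempty, mem_inter] using
      hC.inter_nonempty hlin h4.le hX hY hXY (h3 X hX).ge
  have hthree {X Y Z : Finset V} (hX : X ∈ C) (hY : Y ∈ C) (hZ : Z ∈ C)
      (hXY : X ≠ Y) (hXZ : X ≠ Z) (hYZ : Y ≠ Z) (x : V) : x ∈ X → x ∈ Y → x ∉ Z :=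
    hC.notMem_of_mem_of_mem hlin (fun X hX => (h3 X hX).ge.trans' (by norm_num)) h4.le
      hX hY hZ hXY hXZ hYZ
  obtain ⟨B₁, B₂, B₃, B₄, h12, h13, h14, h23, h24, h34, hC4⟩ := card_eq_four.mp h4
  obtain ⟨hB₁, hB₂, hB₃, hB₄⟩ : B₁ ∈ C ∧ B₂ ∈ C ∧ B₃ ∈ C ∧ B₄ ∈ C := by simp [hC4]
  obtain ⟨a, ha₁, ha₂⟩ := hmeet hB₁ hB₂ h12
  obtain ⟨b, hb₁, hb₃⟩ := hmeet hB₁ hB₃ h13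
  obtain ⟨c, hc₁, hc₄⟩ := hmeet hB₁ hB₄ h14
  obtain ⟨d, hd₂, hd₃⟩ := hmeet hB₂ hB₃ h23
  obtain ⟨e, he₂, he₄⟩ := hmeet hB₂ hB₄ h24
  obtain ⟨f, hf₃, hf₄⟩ := hmeet hB₃ hB₄ h34
  have hb₂ := hthree hB₁ hB₃ hB₂ h13 h12 h23.symm b hb₁ hb₃
  have hc₂ := hthree hB₁ hB₄ hB₂ h14 h12 h24.symm c hc₁ hc₄
  have hc₃ := hthree hB₁ hB₄ hB₃ h14 h13 h34.symm c hc₁ hc₄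
  have hd₁ := hthree hB₂ hB₃ hB₁ h23 h12.symm h13.symm d hd₂ hd₃
  have he₁ := hthree hB₂ hB₄ hB₁ h24 h12.symm h14.symm e he₂ he₄
  have he₃ := hthree hB₂ hB₄ hB₃ h24 h23 h34.symm e he₂ he₄
  have hf₁ := hthree hB₃ hB₄ hB₁ h34 h13.symm h14.symm f hf₃ hf₄
  have hf₂ := hthree hB₃ hB₄ hB₂ h34 h23.symm h24.symm f hf₃ hf₄
  have hab := ne_of_mem_of_not_mem ha₂ hb₂
  have hac := ne_of_mem_of_not_mem ha₂ hc₂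
  have had := ne_of_mem_of_not_mem ha₁ hd₁
  have hae := ne_of_mem_of_not_mem ha₁ he₁
  have haf := ne_of_mem_of_not_mem ha₁ hf₁
  have hbc := ne_of_mem_of_not_mem hb₃ hc₃
  have hbd := ne_of_mem_of_not_mem hb₁ hd₁
  have hbe := ne_of_mem_of_not_mem hb₁ he₁
  have hbf := ne_of_mem_of_not_mem hb₁ hf₁
  have hcd := ne_of_mem_of_not_mem hc₁ hd₁
  have hce := ne_of_mem_of_not_mem hc₁ he₁
  have hcf := ne_of_mem_of_not_mem hc₁ hf₁
  have hde := ne_of_mem_of_not_mem hd₃ he₃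
  have hdf := ne_of_mem_of_not_mem hd₂ hf₂
  have hef := ne_of_mem_of_not_mem he₂ hf₂
  refine ⟨a, b, c, d, e, f, ?_, ?_, ?_, ?_, ?_⟩
  · simp [hab, hac, had, hae, haf, hbc, hbd, hbe, hbf, hcd, hce, hcf, hde, hdf, hef]
  · rwa [insert_insert_singleton_eq_of_card_eq_three (h3 _ hB₁) ha₁ hb₁ hc₁ hab hac hbc]
  · rwa [insert_insert_singleton_eq_of_card_eq_three (h3 _ hB₂) ha₂ hd₂ he₂ had hae hde]
  · rwa [insert_insert_singleton_eq_of_card_eq_three (h3 _ hB₃) hf₃ hb₃ hd₃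
      hbf.symm hdf.symm hbd]
  · rwa [insert_insert_singleton_eq_of_card_eq_three (h3 _ hB₄) hf₄ hc₄ he₄
      hcf.symm hef.symm hce]

theorem isEvenConfig_pasch {a b c d e f : V}
    (h : ([a, b, c, d, e, f] : List V).Pairwise (· ≠ ·)) :
    IsEvenConfig ({{a, b, c}, {a, d, e}, {f, b, d}, {f, c, e}} : Finset (Finset V)) := by
  simp only [List.pairwise_cons, List.mem_cons, List.not_mem_nil, or_false, forall_eq_or_imp,
    forall_eq] at h
  obtain ⟨⟨hab, hac, had, hae, haf⟩, ⟨hbc, hbd, hbe, hbf⟩, ⟨hcd, hce, hcf⟩, ⟨hde, hdf⟩, hef, -⟩ := h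
  have h12 : ({a, b, c} : Finset V) ≠ {a, d, e} :=
    ne_of_mem_of_not_mem' (a := b) (by simp) (by simp [*, hab.symm])
  have h13 : ({a, b, c} : Finset V) ≠ {f, b, d} :=
    ne_of_mem_of_not_mem' (a := a) (by simp) (by simp [*])
  have h14 : ({a, b, c} : Finset V) ≠ {f, c, e} :=
    ne_of_mem_of_not_mem' (a := a) (by simp) (by simp [*])
  have h23 : ({a, d, e} : Finset V) ≠ {f, b, d} :=
    ne_of_mem_of_not_mem' (a := a) (by simp) (by simp [*])
  have h24 : ({a, d, e} : Finset V) ≠ {f, c, e} :=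
    ne_of_mem_of_not_mem' (a := a) (by simp) (by simp [*])
  have h34 : ({f, b, d} : Finset V) ≠ {f, c, e} :=
    ne_of_mem_of_not_mem' (a := b) (by simp) (by simp [*])
  intro x
  rw [card_filter, sum_insert (by simp [*]), sum_insert (by simp [*]), sum_insert (by simp [*]),
    sum_singleton]
  simp only [mem_insert, mem_singleton]
  split_ifs <;> grind

theorem HasPasch.not_evenFree (hB : HasPasch B) {r : ℕ} (hr : 4 ≤ r) : ¬EvenFree B r := by
  obtain ⟨a, b, c, d, e, f, h, h₁, h₂, h₃, h₄⟩ := hB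
  exact fun hfree => hfree _ (by simp [insert_subset_iff, *]) (insert_nonempty _ _)
    (card_le_four.trans hr) (isEvenConfig_pasch h)

theorem evenFree_five_of_not_hasPasch (hsize : ∀ X ∈ B, #X = 3) (hlin : IsLinear B)
    (hB : ¬HasPasch B) : EvenFree B 5 := by
  intro C hCB hne hcard hC
  have h3 : ∀ X ∈ C, #X = 3 := fun X hX => hsize X (hCB hX)
  obtain ⟨k, hk⟩ := hC.even_card fun X hX => by rw [h3 X hX]; decide
  have h4 : #C = 4 := by
    have := hC.card_ne_two
    have := card_pos.mpr hne
    omega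
  exact hB ((hC.hasPasch (hlin.mono hCB) h3 h4).mono hCB)

end

theorem stmt9_general (V : Type*) [DecidableEq V] (B : Finset (Finset V))
    (hsize : ∀ blk ∈ B, blk.card = 3)
    (hpair : ∀ x y : V, x ≠ y → (B.filter (fun blk => x ∈ blk ∧ y ∈ blk)).card = 1) :
    (EvenFree B 5 ↔
      ¬ ∃ a b c d e f : V, ([a, b, c, d, e, f] : List V).Pairwise (· ≠ ·) ∧
        ({a, b, c} : Finset V) ∈ B ∧ ({a, d, e} : Finset V) ∈ B ∧
        ({f, b, d} : Finset V) ∈ B ∧ ({f, c, e} : Finset V) ∈ B) ∧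
    (EvenFree B 4 → EvenFree B 5) := by
  have hlin := isLinear_of_card_filter_le_one fun x y hxy => (hpair x y hxy).le
  have key : EvenFree B 5 ↔ ¬HasPasch B :=
    ⟨fun hfree hB => hB.not_evenFree (by norm_num) hfree,
      evenFree_five_of_not_hasPasch hsize hlin⟩
  exact ⟨key, fun hfree => key.2 fun hB => hB.not_evenFree le_rfl hfree⟩

/-- An `S(2,3,v)` with `v ≥ 3` is 5-even-free iff it contains no
Pasch configuration `{a,b,c}, {a,d,e}, {f,b,d}, {f,c,e}` on six distinct
points; in particular every 4-even-free `S(2,3,v)` is 5-even-free. -/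
theorem stmt9 (V : Type*) [Fintype V] [DecidableEq V] (B : Finset (Finset V))
    (v : ℕ) (hv : Fintype.card V = v) (hv3 : 3 ≤ v)
    (hsize : ∀ blk ∈ B, blk.card = 3)
    (hpair : ∀ x y : V, x ≠ y → (B.filter (fun blk => x ∈ blk ∧ y ∈ blk)).card = 1) :
    (EvenFree B 5 ↔
      ¬ ∃ a b c d e f : V, ([a, b, c, d, e, f] : List V).Pairwise (· ≠ ·) ∧
        ({a, b, c} : Finset V) ∈ B ∧ ({a, d, e} : Finset V) ∈ B ∧
        ({f, b, d} : Finset V) ∈ B ∧ ({f, c, e} : Finset V) ∈ B) ∧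
    (EvenFree B 4 → EvenFree B 5) :=
  stmt9_general V B hsize hpair
end

section
/- Let H be a v × b binary matrix with no 2×2 all-ones submatrix, every row of weight at least 2, every column of weight at least 2, and rank(H·Hᵀ) = 1 over F_2. Then every pair of distinct rows of H shares exactly one common 1-position; i.e., H is the incidence matrix of a pairwise balanced design of index one (with all blocks of size ≥ 2 and all replication numbers odd and ≥ 2). -/
/-!
Over `𝔽₂` the entry `(H Hᵀ)ᵢᵢ'` is the parity of the number of common 1-positions of rows `i`
and `i'`. With no all-ones `2 × 2` submatrix two distinct rows share at most one 1-position, and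
a column of weight `≥ 2` through a 1 of row `i` supplies a row sharing exactly one; so `H Hᵀ` has
no zero column. A symmetric rank-one matrix over `𝔽₂` without zero columns is the all-ones
matrix: its columns are all equal to one vector `u`, and symmetry makes `u` constant. Hence
distinct rows meet an odd number of times, i.e. exactly once, and the diagonal shows that
every row weight is odd.
-/

open Finset Matrix

theorem ZMod.eq_zero_or_eq_one_of_two (x : ZMod 2) : x = 0 ∨ x = 1 := by
  revert x; decide

namespace Matrix

variable {m n K : Type*} [Fintype n]

theorem exists_col_eq_smul_of_rank_eq_one [Field K] [DecidableEq n] {A : Matrix m n K}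
    (h : A.rank = 1) : ∃ u : m → K, u ≠ 0 ∧ ∀ j, ∃ c : K, A.col j = c • u := by
  obtain ⟨⟨u, _⟩, hu, hspan⟩ := finrank_eq_one_iff'.mp h
  refine ⟨u, fun h0 => hu (Subtype.ext h0), fun j => ?_⟩
  obtain ⟨c, hc⟩ := hspan ⟨A.col j, Pi.single j 1, by simp⟩
  exact ⟨c, (congrArg Subtype.val hc).symm⟩

theorem IsSymm.eq_of_zmod_two_of_rank_eq_one [DecidableEq n] {A : Matrix n n (ZMod 2)}
    (hA : A.IsSymm) (h : A.rank = 1) (hcol : ∀ j, A.col j ≠ 0) : A = of fun _ _ => 1 := by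
  obtain ⟨u, hu, hsmul⟩ := exists_col_eq_smul_of_rank_eq_one h
  have hcol_eq : ∀ j, A.col j = u := fun j => by
    obtain ⟨c, hc⟩ := hsmul j
    rcases c.eq_zero_or_eq_one_of_two with rfl | rfl
    · exact absurd (by simpa using hc) (hcol j)
    · simpa using hc
  have hu_const : ∀ i j, u i = u j := fun i j => by
    rw [← congrFun (hcol_eq j) i, ← congrFun (hcol_eq i) j]
    exact hA.apply j i
  obtain ⟨i₀, hi₀⟩ := Function.ne_iff.mp hu
  have hui₀ : u i₀ = 1 := (u i₀).eq_zero_or_eq_one_of_two.resolve_left hi₀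
  ext i j
  exact (congrFun (hcol_eq j) i).trans ((hu_const i i₀).trans hui₀)

variable (H : Matrix m n (ZMod 2))

theorem mul_transpose_apply_eq_card_zmod_two (i i' : m) :
    (H * Hᵀ) i i' = (#{j | H i j = 1 ∧ H i' j = 1} : ZMod 2) := by
  rw [mul_apply, card_filter, Nat.cast_sum]
  refine sum_congr rfl fun j _ => ?_
  rcases (H i j).eq_zero_or_eq_one_of_two with h | h <;>
    rcases (H i' j).eq_zero_or_eq_one_of_two with h' | h' <;> simp [h, h']

theorem card_common_ones_le_one
    (hrect : ¬ ∃ (i₁ i₂ : m) (j₁ j₂ : n), i₁ ≠ i₂ ∧ j₁ ≠ j₂ ∧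
      H i₁ j₁ = 1 ∧ H i₁ j₂ = 1 ∧ H i₂ j₁ = 1 ∧ H i₂ j₂ = 1)
    {i i' : m} (hne : i ≠ i') : #{j | H i j = 1 ∧ H i' j = 1} ≤ 1 := by
  refine card_le_one.mpr fun j₁ hj₁ j₂ hj₂ => ?_
  by_contra hj
  simp only [mem_filter, mem_univ, true_and] at hj₁ hj₂
  exact hrect ⟨i, i', j₁, j₂, hne, hj, hj₁.1, hj₂.1, hj₁.2, hj₂.2⟩

theorem col_mul_transpose_ne_zero_zmod_two [Fintype m]
    (hrect : ¬ ∃ (i₁ i₂ : m) (j₁ j₂ : n), i₁ ≠ i₂ ∧ j₁ ≠ j₂ ∧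
      H i₁ j₁ = 1 ∧ H i₁ j₂ = 1 ∧ H i₂ j₁ = 1 ∧ H i₂ j₂ = 1)
    (hcol : ∀ j, 2 ≤ #{i | H i j = 1}) {i : m} {j : n} (hij : H i j = 1) :
    (H * Hᵀ).col i ≠ 0 := by
  obtain ⟨i', hi', hne⟩ := exists_mem_ne (hcol j) i
  have hi'j : H i' j = 1 := (mem_filter.mp hi').2
  have hcard : #{j | H i' j = 1 ∧ H i j = 1} = 1 :=
    le_antisymm (card_common_ones_le_one H hrect hne)
      (card_pos.mpr ⟨j, mem_filter.mpr ⟨mem_univ j, hi'j, hij⟩⟩)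
  refine Function.ne_iff.mpr ⟨i', ?_⟩
  simp [col_apply, mul_transpose_apply_eq_card_zmod_two, hcard]

end Matrix

/-- A `v × b` binary matrix with no `2 × 2` all-ones submatrix,
all row and column weights at least 2, and `rank (H·Hᵀ) = 1` over `F_2` is the
incidence matrix of a pairwise balanced design of index one: every pair of
distinct rows shares exactly one common 1-position, all blocks (columns) have
size ≥ 2, and all replication numbers (row weights) are odd and ≥ 2. -/
theorem stmt16 (v b : ℕ) (H : Matrix (Fin v) (Fin b) (ZMod 2))
    (h4 : ¬ ∃ (i₁ i₂ : Fin v) (j₁ j₂ : Fin b), i₁ ≠ i₂ ∧ j₁ ≠ j₂ ∧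
      H i₁ j₁ = 1 ∧ H i₁ j₂ = 1 ∧ H i₂ j₁ = 1 ∧ H i₂ j₂ = 1)
    (hrow : ∀ i : Fin v, 2 ≤ (Finset.univ.filter (fun j : Fin b => H i j = 1)).card)
    (hcol : ∀ j : Fin b, 2 ≤ (Finset.univ.filter (fun i : Fin v => H i j = 1)).card)
    (hrank : (H * Hᵀ).rank = 1) :
    (∀ i i' : Fin v, i ≠ i' →
      (Finset.univ.filter (fun j : Fin b => H i j = 1 ∧ H i' j = 1)).card = 1) ∧
    (∀ i : Fin v, Odd (Finset.univ.filter (fun j : Fin b => H i j = 1)).card) := by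
  have hcolM : ∀ i, (H * Hᵀ).col i ≠ 0 := fun i => by
    obtain ⟨j, hj⟩ := card_pos.mp (zero_lt_two.trans_le (hrow i))
    exact col_mul_transpose_ne_zero_zmod_two H h4 hcol (mem_filter.mp hj).2
  have hsymm : (H * Hᵀ).IsSymm := by rw [IsSymm, transpose_mul, transpose_transpose]
  have hall : H * Hᵀ = of fun _ _ => 1 := hsymm.eq_of_zmod_two_of_rank_eq_one hrank hcolM
  have hodd : ∀ i i', Odd #{j | H i j = 1 ∧ H i' j = 1} := fun i i' => by
    rw [← ZMod.natCast_eq_one_iff_odd, ← mul_transpose_apply_eq_card_zmod_two, hall, of_apply]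
  refine ⟨fun i i' hne => ?_, fun i => by simpa only [and_self] using hodd i i⟩
  exact le_antisymm (card_common_ones_le_one H h4 hne) (hodd i i').pos
end

section
/- Suppose H is a v × b binary matrix that is an incidence matrix of a PBD of index one with all blocks of size ≥ 2 and all points in ≥ 2 blocks, with v ≥ 2. Then the Tanner graph of H has girth at most 6; in particular H cannot have girth 8 or more. -/
/-!
Take any point `x` and two distinct blocks `B₁, B₂` through it, and points `y ∈ B₁`, `z ∈ B₂`
other than `x`. Two distinct blocks share at most one point, so `y ∉ B₂` and `z ∉ B₁`; the
block `B₃` through `y` and `z` then misses `x`, and `x, y, z, B₁, B₂, B₃` form a 6-cycle.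
-/

namespace Finset

variable {V : Type*} [DecidableEq V] {B : Finset (Finset V)} {x y : V}

theorem exists_mem_of_card_filter_pair_eq_one
    (h : (B.filter (fun blk => x ∈ blk ∧ y ∈ blk)).card = 1) :
    ∃ A ∈ B, x ∈ A ∧ y ∈ A := by
  obtain ⟨A, hA⟩ := card_pos.1 (h ▸ Nat.one_pos)
  exact ⟨A, (mem_filter.1 hA).1, (mem_filter.1 hA).2⟩

theorem eq_of_card_filter_pair_eq_one
    (h : (B.filter (fun blk => x ∈ blk ∧ y ∈ blk)).card = 1) {A A' : Finset V}
    (hA : A ∈ B) (hA' : A' ∈ B) (hxA : x ∈ A) (hyA : y ∈ A) (hxA' : x ∈ A')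
    (hyA' : y ∈ A') : A = A' :=
  card_le_one.1 h.le A (mem_filter.2 ⟨hA, hxA, hyA⟩) A' (mem_filter.2 ⟨hA', hxA', hyA'⟩)

theorem exists_triangle_of_pbd
    (hpbd : ∀ x y : V, x ≠ y → (B.filter (fun blk => x ∈ blk ∧ y ∈ blk)).card = 1)
    (hblk : ∀ blk ∈ B, 2 ≤ blk.card)
    (hrep : ∀ x : V, 2 ≤ (B.filter (fun blk => x ∈ blk)).card) (x : V) :
    ∃ (y z : V) (B₁ B₂ B₃ : Finset V), x ≠ y ∧ y ≠ z ∧ x ≠ z ∧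
        B₁ ≠ B₂ ∧ B₂ ≠ B₃ ∧ B₁ ≠ B₃ ∧ B₁ ∈ B ∧ B₂ ∈ B ∧ B₃ ∈ B ∧
        x ∈ B₁ ∧ x ∈ B₂ ∧ x ∉ B₃ ∧
        y ∈ B₁ ∧ y ∉ B₂ ∧ y ∈ B₃ ∧
        z ∉ B₁ ∧ z ∈ B₂ ∧ z ∈ B₃ := by
  have hblocks : 1 < (B.filter (fun blk => x ∈ blk)).card := hrep x
  obtain ⟨B₁, hB₁, B₂, hB₂, hB₁₂⟩ := one_lt_card.1 hblocks
  obtain ⟨hB₁B, hxB₁⟩ := mem_filter.1 hB₁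
  obtain ⟨hB₂B, hxB₂⟩ := mem_filter.1 hB₂
  obtain ⟨y, hyB₁, hyx⟩ := exists_mem_ne (hblk B₁ hB₁B) x
  obtain ⟨z, hzB₂, hzx⟩ := exists_mem_ne (hblk B₂ hB₂B) x
  have hyB₂ : y ∉ B₂ := fun hy =>
    hB₁₂ (eq_of_card_filter_pair_eq_one (hpbd x y hyx.symm) hB₁B hB₂B hxB₁ hyB₁ hxB₂ hy)
  have hzB₁ : z ∉ B₁ := fun hz =>
    hB₁₂ (eq_of_card_filter_pair_eq_one (hpbd x z hzx.symm) hB₁B hB₂B hxB₁ hz hxB₂ hzB₂)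
  have hyz : y ≠ z := fun h => hzB₁ (h ▸ hyB₁)
  obtain ⟨B₃, hB₃B, hyB₃, hzB₃⟩ := exists_mem_of_card_filter_pair_eq_one (hpbd y z hyz)
  have hxB₃ : x ∉ B₃ := fun hx => hzB₁ <|
    eq_of_card_filter_pair_eq_one (hpbd x y hyx.symm) hB₃B hB₁B hx hyB₃ hxB₁ hyB₁ ▸ hzB₃
  exact ⟨y, z, B₁, B₂, B₃, hyx.symm, hyz, hzx.symm, hB₁₂, fun h => hyB₂ (h ▸ hyB₃),
    fun h => hzB₁ (h ▸ hzB₃), hB₁B, hB₂B, hB₃B, hxB₁, hxB₂, hxB₃, hyB₁, hyB₂, hyB₃,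
    hzB₁, hzB₂, hzB₃⟩

end Finset

/-- The Tanner graph of an incidence matrix of a pairwise
balanced design of index one with `v ≥ 2` points, all blocks of size ≥ 2 and
all points in ≥ 2 blocks has girth at most 6: there is a 4-cycle (two points in
two common blocks) or a 6-cycle (three points and three blocks forming a
`3 × 3` submatrix with two ones in each row and column); in particular the
girth cannot be 8 or more. -/
theorem stmt17 (V : Type*) [Fintype V] [DecidableEq V] (B : Finset (Finset V))
    (hpbd : ∀ x y : V, x ≠ y → (B.filter (fun blk => x ∈ blk ∧ y ∈ blk)).card = 1)
    (hblk : ∀ blk ∈ B, 2 ≤ blk.card)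
    (hrep : ∀ x : V, 2 ≤ (B.filter (fun blk => x ∈ blk)).card)
    (hv : 2 ≤ Fintype.card V) :
    (∃ (x y : V) (B₁ B₂ : Finset V), x ≠ y ∧ B₁ ≠ B₂ ∧ B₁ ∈ B ∧ B₂ ∈ B ∧
        x ∈ B₁ ∧ x ∈ B₂ ∧ y ∈ B₁ ∧ y ∈ B₂) ∨
    (∃ (x y z : V) (B₁ B₂ B₃ : Finset V), x ≠ y ∧ y ≠ z ∧ x ≠ z ∧
        B₁ ≠ B₂ ∧ B₂ ≠ B₃ ∧ B₁ ≠ B₃ ∧ B₁ ∈ B ∧ B₂ ∈ B ∧ B₃ ∈ B ∧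
        x ∈ B₁ ∧ x ∈ B₂ ∧ x ∉ B₃ ∧
        y ∈ B₁ ∧ y ∉ B₂ ∧ y ∈ B₃ ∧
        z ∉ B₁ ∧ z ∈ B₂ ∧ z ∈ B₃) := by
  obtain ⟨x⟩ : Nonempty V := Fintype.card_pos_iff.1 (by omega)
  exact Or.inr ⟨x, Finset.exists_triangle_of_pbd hpbd hblk hrep x⟩
end
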